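/- For all sufficiently large even n, the number of edge-parallelisms of the complete graph on an n-element set that admit at least one non-identity automorphism is at most n!·n^{3n²/8}. -/
import Mathlib


/-- A perfect matching of the `n`-element set `Fin n`: a collection of
2-element subsets such that every point lies in exactly one of them. -/
def IsPerfectMatchingOn (n : ℕ) (M : Finset (Finset (Fin n))) : Prop :=
  (∀ e ∈ M, e.card = 2) ∧ ∀ x : Fin n, ∃! e, e ∈ M ∧ x ∈ e

/-- An edge-parallelism (1-factorisation) of the complete graph on `Fin n`:
a collection of parallel classes, each a perfect matching, such that every
2-element subset of `Fin n` lies in exactly one class. -/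
def IsOneFactorisation (n : ℕ) (P : Finset (Finset (Finset (Fin n)))) : Prop :=
  (∀ M ∈ P, IsPerfectMatchingOn n M) ∧
  ∀ e : Finset (Fin n), e.card = 2 → ∃! M, M ∈ P ∧ e ∈ M

/-- `g` is an automorphism of the edge-parallelism `P`: the image of every
parallel class is a parallel class. -/
def IsOneFactorisationAuto (n : ℕ) (P : Finset (Finset (Finset (Fin n))))
    (g : Equiv.Perm (Fin n)) : Prop :=
  ∀ M ∈ P, M.image (Finset.image g) ∈ P

namespace OFC

noncomputable def enc {α : Type*} [Fintype α] [DecidableEq α] (a : α) : ℕ :=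
  ((Fintype.equivFin α) a : ℕ)

lemma enc_injective {α : Type*} [Fintype α] [DecidableEq α] :
    Function.Injective (enc (α := α)) := fun a b hab =>
  (Fintype.equivFin α).injective (Fin.val_injective hab)

variable (n : ℕ) (g : Equiv.Perm (Fin n))

def Tg (e : Finset (Fin n)) : Finset (Fin n) := e.image ⇑g

lemma Tg_iterate (k : ℕ) (e : Finset (Fin n)) :
    (Tg n g)^[k] e = e.image ⇑(g ^ k) := by
  induction k with
  | zero => simp
  | succ k ih =>
      rw [Function.iterate_succ_apply', ih, pow_succ']
      simp [Tg, Finset.image_image]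

lemma Tg_card (e : Finset (Fin n)) : (Tg n g e).card = e.card :=
  Finset.card_image_of_injective e g.injective

lemma Tg_injective : Function.Injective (Tg n g) :=
  Finset.image_injective g.injective

lemma Tg_iterate_card (k : ℕ) (e : Finset (Fin n)) :
    ((Tg n g)^[k] e).card = e.card := by
  rw [Tg_iterate]; exact Finset.card_image_of_injective e (g ^ k).injective

lemma Tg_orderOf (e : Finset (Fin n)) : (Tg n g)^[orderOf g] e = e := by
  rw [Tg_iterate, pow_orderOf_eq_one]; simp

lemma Tg_mod (a : ℕ) (e : Finset (Fin n)) :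
    (Tg n g)^[a] e = (Tg n g)^[a % orderOf g] e := by
  conv_lhs => rw [← Nat.div_add_mod a (orderOf g)]
  rw [Function.iterate_add_apply, Function.iterate_mul]
  exact Function.iterate_fixed (Tg_orderOf n g _) _

lemma orderOf_pos' : 0 < orderOf g := orderOf_pos g

noncomputable def keyO (e : Finset (Fin n)) : ℕ :=
  (((Finset.range (orderOf g)).image (fun k => enc ((Tg n g)^[k] e)))).min'
    (Finset.Nonempty.image ⟨0, Finset.mem_range.2 (orderOf_pos g)⟩ _)

noncomputable def Rset : Finset (Finset (Fin n)) :=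
  Finset.univ.filter (fun e => e.card = 2 ∧ enc e = keyO n g e)

lemma keyO_le (e : Finset (Fin n)) (k : ℕ) (hk : k < orderOf g) :
    keyO n g e ≤ enc ((Tg n g)^[k] e) :=
  Finset.min'_le _ _ (Finset.mem_image.2 ⟨k, Finset.mem_range.2 hk, rfl⟩)

lemma keyO_le' (e : Finset (Fin n)) (k : ℕ) :
    keyO n g e ≤ enc ((Tg n g)^[k] e) := by
  rw [Tg_mod]
  exact keyO_le n g e _ (Nat.mod_lt _ (orderOf_pos g))

lemma mem_Rset_card {e : Finset (Fin n)} (he : e ∈ Rset n g) : e.card = 2 :=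
  ((Finset.mem_filter.1 he).2).1

lemma Rset_min {e : Finset (Fin n)} (he : e ∈ Rset n g) (k : ℕ) :
    enc e ≤ enc ((Tg n g)^[k] e) := by
  have := ((Finset.mem_filter.1 he).2).2
  rw [this]; exact keyO_le' n g e k

lemma exists_rep (e : Finset (Fin n)) (he : e.card = 2) :
    ∃ r ∈ Rset n g, ∃ j, e = (Tg n g)^[j] r := by
  set d := orderOf g with hd
  have hmem := Finset.min'_mem (((Finset.range d).image (fun k => enc ((Tg n g)^[k] e))))
    (Finset.Nonempty.image ⟨0, Finset.mem_range.2 (orderOf_pos g)⟩ _)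
  rw [Finset.mem_image] at hmem
  obtain ⟨k₀, hk₀, hk₀e⟩ := hmem
  rw [Finset.mem_range] at hk₀
  refine ⟨(Tg n g)^[k₀] e, ?_, d - k₀, ?_⟩
  · rw [Rset, Finset.mem_filter]
    refine ⟨Finset.mem_univ _, by rw [Tg_iterate_card]; exact he, ?_⟩
    have hle : enc ((Tg n g)^[k₀] e) ≤ keyO n g ((Tg n g)^[k₀] e) := by
      have h2 := Finset.min'_mem (((Finset.range d).image
        (fun k => enc ((Tg n g)^[k] ((Tg n g)^[k₀] e)))))
        (Finset.Nonempty.image ⟨0, Finset.mem_range.2 (orderOf_pos g)⟩ _)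
      rw [Finset.mem_image] at h2
      obtain ⟨k₁, _, hk₁e⟩ := h2
      have : (Tg n g)^[k₁] ((Tg n g)^[k₀] e) = (Tg n g)^[k₁ + k₀] e := by
        rw [Function.iterate_add_apply]
      rw [keyO, ← hk₁e, this, hk₀e]
      exact keyO_le' n g e _
    have hge : keyO n g ((Tg n g)^[k₀] e) ≤ enc ((Tg n g)^[k₀] e) := by
      have := keyO_le n g ((Tg n g)^[k₀] e) 0 (orderOf_pos g)
      simpa using this
    exact le_antisymm hle hge
  · rw [← Function.iterate_add_apply, Nat.sub_add_cancel (le_of_lt hk₀), hd, Tg_orderOf]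

variable (n : ℕ) (g : Equiv.Perm (Fin n))

def Fx : Finset (Fin n) := Finset.univ.filter (fun x => g x = x)

-- a two-element set containing two given distinct elements equals the pair
lemma eq_pair {e : Finset (Fin n)} (he : e.card = 2) {a b : Fin n}
    (ha : a ∈ e) (hb : b ∈ e) (hab : a ≠ b) : e = {a, b} := by
  symm
  apply Finset.eq_of_subset_of_card_le
  · intro x hx
    rcases Finset.mem_insert.1 hx with h | h
    · exact h ▸ ha
    · exact (Finset.mem_singleton.1 h) ▸ hb
  · rw [he, Finset.card_insert_of_notMem (by simpa using hab), Finset.card_singleton]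

lemma Tg_eq_of_subset_Fx {e : Finset (Fin n)} (he : e ⊆ Fx n g) :
    e.image ⇑g = e := by
  have : ∀ x ∈ e, g x = x := fun x hx => (Finset.mem_filter.1 (he hx)).2
  calc e.image ⇑g = e.image id := Finset.image_congr (fun x hx => this x hx)
    _ = e := Finset.image_id

noncomputable def Rfix : Finset (Finset (Fin n)) :=
  (Rset n g).filter (fun e => Tg n g e = e)

noncomputable def Rmov : Finset (Finset (Fin n)) :=
  (Rset n g).filter (fun e => ¬ Tg n g e = e)

lemma Rfix_card_le : (Rfix n g).card ≤ ((Fx n g).card.choose 2) + n + 1 := by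
  classical
  have hsplit := Finset.card_filter_add_card_filter_not
    (s := Rfix n g) (p := fun e => e ⊆ Fx n g)
  have h1 : ((Rfix n g).filter (fun e => e ⊆ Fx n g)).card ≤ (Fx n g).card.choose 2 := by
    rw [← Finset.card_powersetCard]
    apply Finset.card_le_card
    intro e he
    rw [Finset.mem_filter] at he
    exact Finset.mem_powersetCard.2 ⟨he.2, mem_Rset_card n g (Finset.mem_filter.1 he.1).1⟩
  have h2 : ((Rfix n g).filter (fun e => ¬ e ⊆ Fx n g)).card ≤ n + 1 := by
    have : ((Rfix n g).filter (fun e => ¬ e ⊆ Fx n g)).card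
        ≤ (Finset.univ : Finset (Option (Fin n))).card := by
      apply Finset.card_le_card_of_injOn
        (fun e => if h : (e.filter (fun x => ¬ g x = x)).Nonempty then some h.choose else none)
      · intro e _; exact Finset.mem_univ _
      · intro e he e' he' hee
        rw [Finset.coe_filter, Set.mem_setOf_eq] at he he'
        obtain ⟨heR, heF⟩ := he
        obtain ⟨heR', heF'⟩ := he'
        rw [Rfix, Finset.mem_filter] at heR heR'
        have hne : (e.filter (fun x => ¬ g x = x)).Nonempty := by
          obtain ⟨x, hx, hx2⟩ := Finset.not_subset.1 heF
          refine ⟨x, Finset.mem_filter.2 ⟨hx, fun hgx => hx2 ?_⟩⟩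
          exact Finset.mem_filter.2 ⟨Finset.mem_univ _, hgx⟩
        have hne' : (e'.filter (fun x => ¬ g x = x)).Nonempty := by
          obtain ⟨x, hx, hx2⟩ := Finset.not_subset.1 heF'
          refine ⟨x, Finset.mem_filter.2 ⟨hx, fun hgx => hx2 ?_⟩⟩
          exact Finset.mem_filter.2 ⟨Finset.mem_univ _, hgx⟩
        dsimp only at hee
        rw [dif_pos hne, dif_pos hne'] at hee
        have hz := hne.choose_spec
        have hz' := hne'.choose_spec
        rw [Finset.mem_filter] at hz hz'
        have hzz : hne.choose = hne'.choose := Option.some_injective _ hee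
        -- e = {z, g z} and e' = {z, g z}
        have hgz : g hne.choose ∈ e := by
          have : g hne.choose ∈ Tg n g e := Finset.mem_image_of_mem _ hz.1
          rwa [heR.2] at this
        have hgz' : g hne'.choose ∈ e' := by
          have : g hne'.choose ∈ Tg n g e' := Finset.mem_image_of_mem _ hz'.1
          rwa [heR'.2] at this
        have hepair := eq_pair n (mem_Rset_card n g heR.1) hz.1 hgz
          (fun h => hz.2 h.symm)
        have hepair' := eq_pair n (mem_Rset_card n g heR'.1) hz'.1 hgz'
          (fun h => hz'.2 h.symm)
        rw [hepair, hepair', hzz]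
    simpa using this
  omega

lemma Rmov_card_le : 2 * (Rmov n g).card + ((Fx n g).card.choose 2) ≤ n.choose 2 := by
  classical
  set d := orderOf g with hd
  have hd1 : 1 ≤ d := orderOf_pos g
  set A := Rmov n g with hA
  set B := (Rmov n g).image (Tg n g) with hB
  set C := Finset.powersetCard 2 (Fx n g) with hC
  have hBcard : B.card = A.card := Finset.card_image_of_injective _ (Tg_injective n g)
  have hCcard : C.card = (Fx n g).card.choose 2 := Finset.card_powersetCard _ _
  have hmovR : ∀ e ∈ Rmov n g, e ∈ Rset n g ∧ ¬ Tg n g e = e := by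
    intro e he; exact Finset.mem_filter.1 he |>.2 |> fun h => ⟨(Finset.mem_filter.1 he).1, h⟩
  have hAB : Disjoint A B := by
    rw [Finset.disjoint_left]
    intro e heA heB
    obtain ⟨e', he', hee⟩ := Finset.mem_image.1 heB
    obtain ⟨heR, heM⟩ := hmovR e heA
    obtain ⟨heR', heM'⟩ := hmovR e' he'
    have h1 : enc e' ≤ enc e := by
      have := Rset_min n g heR' 1
      rwa [Function.iterate_one, hee] at this
    have h2 : enc e ≤ enc e' := by
      have := Rset_min n g heR (d - 1)
      have heq : (Tg n g)^[d - 1] e = e' := by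
        rw [← hee, ← Function.iterate_succ_apply, show (d-1).succ = d by omega, hd, Tg_orderOf]
      rwa [heq] at this
    have : e = e' := enc_injective (le_antisymm h2 h1)
    exact heM (this ▸ hee)
  have hsubFx : ∀ e ∈ C, Tg n g e = e := by
    intro e heC
    exact Tg_eq_of_subset_Fx n g (Finset.mem_powersetCard.1 heC).1
  have hAC : Disjoint A C := by
    rw [Finset.disjoint_left]
    intro e heA heC
    exact (hmovR e heA).2 (hsubFx e heC)
  have hBC : Disjoint B C := by
    rw [Finset.disjoint_left]
    intro e heB heC
    obtain ⟨e', he', hee⟩ := Finset.mem_image.1 heB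
    obtain ⟨heR', heM'⟩ := hmovR e' he'
    have hfix : Tg n g e = e := hsubFx e heC
    have : e' = e := by
      have h1 : (Tg n g)^[d] e' = e' := Tg_orderOf n g e'
      have h2 : (Tg n g)^[d] e' = e := by
        rw [← Nat.sub_add_cancel hd1, Function.iterate_succ_apply, hee]
        exact Function.iterate_fixed hfix _
      rw [← h1, h2]
    exact heM' (hee.trans this.symm)
  have hsub : A ∪ B ∪ C ⊆ Finset.powersetCard 2 (Finset.univ : Finset (Fin n)) := by
    intro e he
    rcases Finset.mem_union.1 he with h | h
    · rcases Finset.mem_union.1 h with h' | h'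
      · exact Finset.mem_powersetCard.2 ⟨Finset.subset_univ _,
          mem_Rset_card n g (hmovR e h').1⟩
      · obtain ⟨e', he', hee⟩ := Finset.mem_image.1 h'
        refine Finset.mem_powersetCard.2 ⟨Finset.subset_univ _, ?_⟩
        rw [← hee, Tg_card]
        exact mem_Rset_card n g (hmovR e' he').1
    · exact Finset.mem_powersetCard.2 ⟨Finset.subset_univ _, (Finset.mem_powersetCard.1 h).2⟩
  have hcard : A.card + B.card + C.card ≤ n.choose 2 := by
    have h1 : (A ∪ B ∪ C).card = A.card + B.card + C.card := by
      rw [Finset.card_union_of_disjoint, Finset.card_union_of_disjoint hAB]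
      exact Finset.disjoint_union_left.2 ⟨hAC, hBC⟩
    have h2 := Finset.card_le_card hsub
    rw [Finset.card_powersetCard, Finset.card_univ, Fintype.card_fin] at h2
    omega
  omega

/-! ### class-of-edge, index functions -/

variable {n g}

noncomputable def clf (P : Finset (Finset (Finset (Fin n)))) (e : Finset (Fin n)) :
    Finset (Finset (Fin n)) :=
  if h : ∃ M, M ∈ P ∧ e ∈ M then h.choose else ∅

lemma clf_mem {P : Finset (Finset (Finset (Fin n)))} {e : Finset (Fin n)}
    (h : ∃ M, M ∈ P ∧ e ∈ M) : clf P e ∈ P ∧ e ∈ clf P e := by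
  rw [clf, dif_pos h]; exact h.choose_spec

lemma clf_eq {P : Finset (Finset (Finset (Fin n)))} {e : Finset (Fin n)}
    (hP : IsOneFactorisation n P) (he : e.card = 2)
    {M : Finset (Finset (Fin n))} (hM : M ∈ P) (heM : e ∈ M) : clf P e = M := by
  have h : ∃ M, M ∈ P ∧ e ∈ M := ⟨M, hM, heM⟩
  have hc := clf_mem h
  exact (hP.2 e he).unique ⟨hc.1, hc.2⟩ ⟨hM, heM⟩

noncomputable def idx (P : Finset (Finset (Finset (Fin n))))
    (M : Finset (Finset (Fin n))) : ℕ :=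
  (P.filter (fun M' => enc M' < enc M)).card

lemma idx_lt {P : Finset (Finset (Finset (Fin n)))} {M : Finset (Finset (Fin n))}
    (hM : M ∈ P) : idx P M < P.card := by
  apply Finset.card_lt_card
  constructor
  · exact Finset.filter_subset _ _
  · intro hsub
    have := hsub hM
    rw [Finset.mem_filter] at this
    exact lt_irrefl _ this.2

lemma idx_injOn {P : Finset (Finset (Finset (Fin n)))} {M M' : Finset (Finset (Fin n))}
    (hM : M ∈ P) (hM' : M' ∈ P) (h : idx P M = idx P M') : M = M' := by
  by_contra hne
  have henc : enc M ≠ enc M' := fun h' => hne (enc_injective h')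
  rcases lt_or_gt_of_ne henc with hlt | hlt
  · have : idx P M < idx P M' := by
      apply Finset.card_lt_card
      constructor
      · intro x hx
        rw [Finset.mem_filter] at hx ⊢
        exact ⟨hx.1, hx.2.trans hlt⟩
      · intro hsub
        have := hsub (Finset.mem_filter.2 ⟨hM, hlt⟩)
        rw [Finset.mem_filter] at this
        exact lt_irrefl _ this.2
    omega
  · have : idx P M' < idx P M := by
      apply Finset.card_lt_card
      constructor
      · intro x hx
        rw [Finset.mem_filter] at hx ⊢
        exact ⟨hx.1, hx.2.trans hlt⟩
      · intro hsub
        have := hsub (Finset.mem_filter.2 ⟨hM', hlt⟩)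
        rw [Finset.mem_filter] at this
        exact lt_irrefl _ this.2
    omega

lemma card_P_le {P : Finset (Finset (Finset (Fin n)))}
    (hP : IsOneFactorisation n P) (hn : 0 < n) : P.card ≤ n := by
  classical
  set x₀ : Fin n := ⟨0, hn⟩ with hx₀
  have : P.card ≤ (Finset.univ : Finset (Fin n)).card := by
    apply Finset.card_le_card_of_injOn
      (fun M => if h : ∃ y, y ≠ x₀ ∧ ∃ e, e ∈ M ∧ x₀ ∈ e ∧ y ∈ e then h.choose else x₀)
    · intro M _; exact Finset.mem_univ _
    · intro M hM M' hM' hMM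
      simp only [Finset.mem_coe] at hM hM'
      have hex : ∀ N ∈ P, ∃ y, y ≠ x₀ ∧ ∃ e, e ∈ N ∧ x₀ ∈ e ∧ y ∈ e := by
        intro N hN
        obtain ⟨e, ⟨heN, hx₀e⟩, -⟩ := (hP.1 N hN).2 x₀
        have hcard := (hP.1 N hN).1 e heN
        obtain ⟨a, b, hab, heab⟩ := Finset.card_eq_two.1 hcard
        rcases show x₀ = a ∨ x₀ = b by
          have := hx₀e; rw [heab] at this; simpa using this with h | h
        · exact ⟨b, by rw [h]; exact hab.symm, e, heN, hx₀e, by rw [heab]; simp⟩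
        · exact ⟨a, by rw [h]; exact hab, e, heN, hx₀e, by rw [heab]; simp⟩
      have h1 := hex M hM
      have h2 := hex M' hM'
      dsimp only at hMM
      rw [dif_pos h1, dif_pos h2] at hMM
      obtain ⟨hy1, e, heM, hx₀e, hye⟩ := h1.choose_spec
      obtain ⟨hy2, e', heM', hx₀e', hye'⟩ := h2.choose_spec
      rw [hMM] at hy1 hye
      have hce := (hP.1 M hM).1 e heM
      have hce' := (hP.1 M' hM').1 e' heM'
      have hee : e = e' := by
        rw [eq_pair n hce hx₀e hye (fun h => hy1 h.symm),
            eq_pair n hce' hx₀e' hye' (fun h => hy2 h.symm)]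
      exact (hP.2 e hce).unique ⟨hM, heM⟩ ⟨hM', hee ▸ heM'⟩
  simpa using this

variable (n g)

noncomputable def Fid (P : Finset (Finset (Finset (Fin n)))) (e : Finset (Fin n)) : ℕ :=
  idx P (clf P e)

noncomputable def Gmap (M : Finset (Finset (Fin n))) : Finset (Finset (Fin n)) :=
  M.image (Finset.image ⇑g)

noncomputable def sig (P : Finset (Finset (Finset (Fin n)))) (i : ℕ) : ℕ :=
  if h : ∃ M, M ∈ P ∧ idx P M = i then idx P (Gmap n g h.choose) else 0

variable {n g}

lemma sig_idx {P : Finset (Finset (Finset (Fin n)))} {M : Finset (Finset (Fin n))}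
    (hM : M ∈ P) : sig n g P (idx P M) = idx P (Gmap n g M) := by
  have h : ∃ M', M' ∈ P ∧ idx P M' = idx P M := ⟨M, hM, rfl⟩
  rw [sig, dif_pos h]
  congr 1
  congr 1
  exact idx_injOn h.choose_spec.1 hM h.choose_spec.2

lemma clf_Tg {P : Finset (Finset (Finset (Fin n)))} {e : Finset (Fin n)}
    (hP : IsOneFactorisation n P) (hA : IsOneFactorisationAuto n P g)
    (he : e.card = 2) : clf P (Tg n g e) = Gmap n g (clf P e) := by
  have hc := clf_mem (⟨_, ((hP.2 e he).exists.choose_spec : _ ∧ _)⟩ :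
    ∃ M, M ∈ P ∧ e ∈ M)
  exact clf_eq hP (by rw [Tg_card]; exact he) (hA _ hc.1)
    (Finset.mem_image_of_mem _ hc.2)

lemma Fid_Tg {P : Finset (Finset (Finset (Fin n)))} {e : Finset (Fin n)}
    (hP : IsOneFactorisation n P) (hA : IsOneFactorisationAuto n P g)
    (he : e.card = 2) : Fid n P (Tg n g e) = sig n g P (Fid n P e) := by
  have hc := clf_mem (⟨_, ((hP.2 e he).exists.choose_spec : _ ∧ _)⟩ :
    ∃ M, M ∈ P ∧ e ∈ M)
  rw [Fid, Fid, clf_Tg hP hA he, sig_idx hc.1]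

lemma Fid_lt {P : Finset (Finset (Finset (Fin n)))} {e : Finset (Fin n)}
    (hP : IsOneFactorisation n P) (he : e.card = 2) (hn : 0 < n) :
    Fid n P e < n := by
  have hc := clf_mem (⟨_, ((hP.2 e he).exists.choose_spec : _ ∧ _)⟩ :
    ∃ M, M ∈ P ∧ e ∈ M)
  exact lt_of_lt_of_le (idx_lt hc.1) (card_P_le hP hn)

lemma sig_lt {P : Finset (Finset (Finset (Fin n)))}
    (hP : IsOneFactorisation n P) (hA : IsOneFactorisationAuto n P g) (hn : 0 < n)
    (i : ℕ) : sig n g P i < n := by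
  rw [sig]
  split
  · next h =>
      exact lt_of_lt_of_le (idx_lt (hA _ h.choose_spec.1)) (card_P_le hP hn)
  · exact hn

lemma fid_eq_all {P Q : Finset (Finset (Finset (Fin n)))}
    (hP : IsOneFactorisation n P) (hAP : IsOneFactorisationAuto n P g)
    (hQ : IsOneFactorisation n Q) (hAQ : IsOneFactorisationAuto n Q g)
    (hn : 0 < n)
    (h1 : ∀ e ∈ Rset n g, Fid n P e = Fid n Q e)
    (h2 : ∀ i < n, sig n g P i = sig n g Q i) :
    ∀ e : Finset (Fin n), e.card = 2 → Fid n P e = Fid n Q e := by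
  have hstep : ∀ (j : ℕ) (r : Finset (Fin n)), r ∈ Rset n g →
      Fid n P ((Tg n g)^[j] r) = Fid n Q ((Tg n g)^[j] r) := by
    intro j
    induction j with
    | zero => intro r hr; simpa using h1 r hr
    | succ j ih =>
        intro r hr
        have hcard : ((Tg n g)^[j] r).card = 2 := by
          rw [Tg_iterate_card]; exact mem_Rset_card n g hr
        rw [Function.iterate_succ_apply', Fid_Tg hP hAP hcard, Fid_Tg hQ hAQ hcard,
          ih r hr, h2 _ (Fid_lt hQ hcard hn)]
  intro e he
  obtain ⟨r, hr, j, rfl⟩ := exists_rep n g e he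
  exact hstep j r hr

lemma eq_of_encodings {P Q : Finset (Finset (Finset (Fin n)))}
    (hP : IsOneFactorisation n P) (hAP : IsOneFactorisationAuto n P g)
    (hQ : IsOneFactorisation n Q) (hAQ : IsOneFactorisationAuto n Q g)
    (hn : 0 < n)
    (h1 : ∀ e ∈ Rset n g, Fid n P e = Fid n Q e)
    (h2 : ∀ i < n, sig n g P i = sig n g Q i) : P = Q := by
  have hAll := fid_eq_all hP hAP hQ hAQ hn h1 h2
  have hsub : ∀ (P' Q' : Finset (Finset (Finset (Fin n)))),
      IsOneFactorisation n P' → IsOneFactorisation n Q' →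
      (∀ e : Finset (Fin n), e.card = 2 → Fid n P' e = Fid n Q' e) → P' ⊆ Q' := by
    intro P' Q' hP' hQ' hall M hM
    -- pick an edge of M
    obtain ⟨e₀, ⟨he₀M, -⟩, -⟩ := (hP'.1 M hM).2 ⟨0, hn⟩
    have he₀ : e₀.card = 2 := (hP'.1 M hM).1 e₀ he₀M
    have hclP : clf P' e₀ = M := clf_eq hP' he₀ hM he₀M
    have hcQ := clf_mem (⟨_, ((hQ'.2 e₀ he₀).exists.choose_spec : _ ∧ _)⟩ :
      ∃ N, N ∈ Q' ∧ e₀ ∈ N)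
    set N := clf Q' e₀ with hN
    suffices hMN : M = N by rw [hMN]; exact hcQ.1
    ext e
    constructor
    · intro heM
      have hec : e.card = 2 := (hP'.1 M hM).1 e heM
      have hclPe : clf P' e = M := clf_eq hP' hec hM heM
      have : Fid n Q' e = Fid n Q' e₀ := by
        rw [← hall e hec, ← hall e₀ he₀, Fid, Fid, hclPe, hclP]
      have hcQe := clf_mem (⟨_, ((hQ'.2 e hec).exists.choose_spec : _ ∧ _)⟩ :
        ∃ N', N' ∈ Q' ∧ e ∈ N')
      have heq : clf Q' e = N := idx_injOn hcQe.1 hcQ.1 this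
      rw [← heq]; exact hcQe.2
    · intro heN
      have hec : e.card = 2 := (hQ'.1 N hcQ.1).1 e heN
      have hclQe : clf Q' e = N := clf_eq hQ' hec hcQ.1 heN
      have : Fid n P' e = Fid n P' e₀ := by
        rw [hall e hec, hall e₀ he₀, Fid, Fid, hclQe, hN]
      have hcPe := clf_mem (⟨_, ((hP'.2 e hec).exists.choose_spec : _ ∧ _)⟩ :
        ∃ N', N' ∈ P' ∧ e ∈ N')
      have heq : clf P' e = M := by
        have h3 : idx P' (clf P' e) = idx P' (clf P' e₀) := this
        rw [hclP] at h3
        exact idx_injOn hcPe.1 hM h3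
      rw [← heq]; exact hcPe.2
  exact (hsub P Q hP hQ hAll).antisymm
    (hsub Q P hQ hP (fun e he => (hAll e he).symm))

variable (n g)

noncomputable def Sg : Finset (Finset (Finset (Finset (Fin n)))) :=
  @Finset.filter _ (fun P => IsOneFactorisation n P ∧ IsOneFactorisationAuto n P g)
    (Classical.decPred _) Finset.univ

lemma card_Sg_le (hn : 0 < n) : (Sg n g).card ≤ n ^ ((Rset n g).card + n) := by
  classical
  have hmem : ∀ P ∈ Sg n g, IsOneFactorisation n P ∧ IsOneFactorisationAuto n P g := by
    intro P hP
    simp only [Sg, Finset.mem_filter] at hP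
    exact hP.2
  have hkey : (Sg n g).card ≤
      (Finset.univ : Finset (({x // x ∈ Rset n g} → Fin n) × (Fin n → Fin n))).card := by
    apply Finset.card_le_card_of_injOn
      (fun P => (fun r : {x // x ∈ Rset n g} => (⟨Fid n P r.1 % n, Nat.mod_lt _ hn⟩ : Fin n),
        fun i : Fin n => (⟨sig n g P i % n, Nat.mod_lt _ hn⟩ : Fin n)))
    · intro P _; exact Finset.mem_univ _
    · intro P hP Q hQ h
      simp only [Finset.mem_coe] at hP hQ
      obtain ⟨hPf, hPA⟩ := hmem P hP
      obtain ⟨hQf, hQA⟩ := hmem Q hQ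
      apply eq_of_encodings hPf hPA hQf hQA hn
      · intro e he
        have h1 := congrFun (congrArg Prod.fst h) ⟨e, he⟩
        have h2 := congr_arg Fin.val h1
        simp only at h2
        rwa [Nat.mod_eq_of_lt (Fid_lt hPf (mem_Rset_card n g he) hn),
          Nat.mod_eq_of_lt (Fid_lt hQf (mem_Rset_card n g he) hn)] at h2
      · intro i hi
        have h1 := congrFun (congrArg Prod.snd h) ⟨i, hi⟩
        have h2 := congr_arg Fin.val h1
        simp only at h2
        rwa [Nat.mod_eq_of_lt (sig_lt hPf hPA hn _),
          Nat.mod_eq_of_lt (sig_lt hQf hQA hn _)] at h2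
  rw [Finset.card_univ, Fintype.card_prod, Fintype.card_fun, Fintype.card_fun,
    Fintype.card_coe, Fintype.card_fin, ← pow_add] at hkey
  exact hkey

variable {n g}

lemma two_mul_choose_two (k : ℕ) : 2 * k.choose 2 = k * (k - 1) := by
  rw [Nat.choose_two_right]
  apply Nat.mul_div_cancel'
  rcases k with _ | k
  · simp
  · have := Nat.even_mul_succ_self k
    rw [Nat.succ_sub_one]
    exact (even_iff_two_dvd.1 (by rwa [mul_comm (k+1) k]))

lemma matching_partition {M : Finset (Finset (Fin n))} (hM : IsPerfectMatchingOn n M)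
    (A : Finset (Fin n)) (hcl : ∀ e ∈ M, ∀ x ∈ e, x ∈ A → e ⊆ A) :
    2 * (M.filter (fun e => e ⊆ A)).card = A.card := by
  classical
  have hA : A = (M.filter (fun e => e ⊆ A)).biUnion id := by
    ext x
    constructor
    · intro hx
      obtain ⟨e, ⟨heM, hxe⟩, -⟩ := hM.2 x
      exact Finset.mem_biUnion.2 ⟨e, Finset.mem_filter.2 ⟨heM, hcl e heM x hxe hx⟩, hxe⟩
    · intro hx
      obtain ⟨e, he, hxe⟩ := Finset.mem_biUnion.1 hx
      exact (Finset.mem_filter.1 he).2 hxe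
  have hdisj : ∀ e₁ ∈ M.filter (fun e => e ⊆ A), ∀ e₂ ∈ M.filter (fun e => e ⊆ A),
      e₁ ≠ e₂ → Disjoint (id e₁) (id e₂) := by
    intro e₁ h₁ e₂ h₂ hne
    rw [Finset.disjoint_left]
    intro x hx₁ hx₂
    exact hne ((hM.2 x).unique ⟨(Finset.mem_filter.1 h₁).1, hx₁⟩
      ⟨(Finset.mem_filter.1 h₂).1, hx₂⟩)
  have hc2 : A.card = ∑ e ∈ M.filter (fun e => e ⊆ A), (id e).card := by
    conv_lhs => rw [hA]
    exact Finset.card_biUnion hdisj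
  have hc3 : A.card = (M.filter (fun e => e ⊆ A)).card * 2 := by
    rw [hc2, Finset.sum_congr rfl
      (fun e he => (hM.1 e (Finset.mem_filter.1 he).1 : (id e).card = 2)),
      Finset.sum_const, smul_eq_mul]
  omega

lemma fixed_class_eq {P : Finset (Finset (Finset (Fin n)))}
    (hP : IsOneFactorisation n P) (hA : IsOneFactorisationAuto n P g)
    {M : Finset (Finset (Fin n))} (hM : M ∈ P) {e : Finset (Fin n)}
    (heM : e ∈ M) (heF : e ⊆ Fx n g) : Gmap n g M = M := by
  have hcard : e.card = 2 := (hP.1 M hM).1 e heM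
  have hTe : e.image ⇑g = e := Tg_eq_of_subset_Fx n g heF
  have h1 : e ∈ Gmap n g M := by
    rw [Gmap, ← hTe]
    exact Finset.mem_image_of_mem _ heM
  exact (hP.2 e hcard).unique ⟨hA M hM, h1⟩ ⟨hM, heM⟩

lemma no_mixed {P : Finset (Finset (Finset (Fin n)))}
    (hP : IsOneFactorisation n P) {M : Finset (Finset (Fin n))} (hM : M ∈ P)
    (hGM : Gmap n g M = M) {e : Finset (Fin n)} (heM : e ∈ M)
    {a z : Fin n} (ha : a ∈ e) (hz : z ∈ e) (hga : g a = a) (hgz : g z ≠ z) :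
    False := by
  have hcard : e.card = 2 := (hP.1 M hM).1 e heM
  have he' : e.image ⇑g ∈ M := by
    rw [← hGM, Gmap]; exact Finset.mem_image_of_mem _ heM
  have haz : a ≠ z := fun h => hgz (h ▸ hga)
  have ha' : a ∈ e.image ⇑g := Finset.mem_image.2 ⟨a, ha, hga⟩
  have hee : e = e.image ⇑g := ((hP.1 M hM).2 a).unique ⟨heM, ha⟩ ⟨he', ha'⟩
  have hgze : g z ∈ e := by rw [hee]; exact Finset.mem_image_of_mem _ hz
  have hepair : e = {a, z} := eq_pair n hcard ha hz haz
  rw [hepair] at hgze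
  rcases Finset.mem_insert.1 hgze with h | h
  · have : z = a := g.injective (by rw [h, hga])
    exact haz this.symm
  · exact hgz (Finset.mem_singleton.1 h)

lemma two_mul_fixed_le {P : Finset (Finset (Finset (Fin n)))} (hg : g ≠ 1)
    (hP : IsOneFactorisation n P) (hA : IsOneFactorisationAuto n P g) :
    2 * (Fx n g).card ≤ n := by
  classical
  set W : Finset (Fin n) := Finset.univ.filter (fun x => ¬ g x = x) with hW
  set f := (Fx n g).card with hf
  set m := W.card with hm
  have hfm : f + m = n := by
    rw [hf, hm, hW, Fx, Finset.card_filter_add_card_filter_not,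
      Finset.card_univ, Fintype.card_fin]
  have hm1 : 1 ≤ m := by
    by_contra h
    push_neg at h
    interval_cases m
    · have : W = ∅ := Finset.card_eq_zero.1 (by omega)
      apply hg
      ext x
      by_contra hx
      have : x ∈ W := Finset.mem_filter.2 ⟨Finset.mem_univ _, fun h' => hx (by simp [h'])⟩
      simp [‹W = ∅›] at this
  set FE := Finset.powersetCard 2 (Fx n g) with hFE
  set Tcl := FE.image (clf P) with hTcl
  have hTclmem : ∀ M ∈ Tcl, M ∈ P ∧ Gmap n g M = M := by
    intro M hM
    obtain ⟨e, heFE, hce⟩ := Finset.mem_image.1 hM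
    rw [Finset.mem_powersetCard] at heFE
    have hc := clf_mem (⟨_, ((hP.2 e heFE.2).exists.choose_spec : _ ∧ _)⟩ :
      ∃ N, N ∈ P ∧ e ∈ N)
    rw [hce] at hc
    exact ⟨hc.1, fixed_class_eq hP hA hc.1 hc.2 heFE.1⟩
  have hFsub : ∀ M ∈ Tcl, ∀ e ∈ M, ∀ x ∈ e, x ∈ Fx n g → e ⊆ Fx n g := by
    intro M hM e heM x hxe hxF y hy
    by_contra hyF
    have hgy : ¬ g y = y := by
      intro h
      exact hyF (Finset.mem_filter.2 ⟨Finset.mem_univ _, h⟩)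
    exact no_mixed hP (hTclmem M hM).1 (hTclmem M hM).2 heM hxe hy
      ((Finset.mem_filter.1 hxF).2) hgy
  have hWsub : ∀ M ∈ Tcl, ∀ e ∈ M, ∀ x ∈ e, x ∈ W → e ⊆ W := by
    intro M hM e heM x hxe hxW y hy
    by_contra hyW
    have hgy : g y = y := by
      by_contra h
      exact hyW (Finset.mem_filter.2 ⟨Finset.mem_univ _, h⟩)
    exact no_mixed hP (hTclmem M hM).1 (hTclmem M hM).2 heM hy hxe hgy
      ((Finset.mem_filter.1 hxW).2)
  have hdisjf : ∀ (A : Finset (Fin n)), ∀ M₁ ∈ Tcl, ∀ M₂ ∈ Tcl, M₁ ≠ M₂ →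
      Disjoint (M₁.filter (fun e => e ⊆ A)) (M₂.filter (fun e => e ⊆ A)) := by
    intro A M₁ h₁ M₂ h₂ hne
    rw [Finset.disjoint_left]
    intro e he₁ he₂
    rw [Finset.mem_filter] at he₁ he₂
    have hc : e.card = 2 := (hP.1 M₁ (hTclmem M₁ h₁).1).1 e he₁.1
    exact hne ((hP.2 e hc).unique ⟨(hTclmem M₁ h₁).1, he₁.1⟩ ⟨(hTclmem M₂ h₂).1, he₂.1⟩)
  -- F edges count
  have hFEeq : FE = Tcl.biUnion (fun M => M.filter (fun e => e ⊆ Fx n g)) := by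
    ext e
    constructor
    · intro he
      have heFE := Finset.mem_powersetCard.1 he
      have hc := clf_mem (⟨_, ((hP.2 e heFE.2).exists.choose_spec : _ ∧ _)⟩ :
        ∃ N, N ∈ P ∧ e ∈ N)
      exact Finset.mem_biUnion.2 ⟨clf P e, Finset.mem_image_of_mem _ he,
        Finset.mem_filter.2 ⟨hc.2, heFE.1⟩⟩
    · intro he
      obtain ⟨M, hM, heM⟩ := Finset.mem_biUnion.1 he
      rw [Finset.mem_filter] at heM
      exact Finset.mem_powersetCard.2 ⟨heM.2, (hP.1 M (hTclmem M hM).1).1 e heM.1⟩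
  have hFcount : Tcl.card * f = f * (f - 1) := by
    have h1 : FE.card = ∑ M ∈ Tcl, (M.filter (fun e => e ⊆ Fx n g)).card := by
      rw [hFEeq]; exact Finset.card_biUnion (hdisjf _)
    have h2 : 2 * FE.card = ∑ M ∈ Tcl, 2 * (M.filter (fun e => e ⊆ Fx n g)).card := by
      rw [h1, Finset.mul_sum]
    have h3 : ∀ M ∈ Tcl, 2 * (M.filter (fun e => e ⊆ Fx n g)).card = f := by
      intro M hM
      exact matching_partition (hP.1 M (hTclmem M hM).1) _ (hFsub M hM)
    rw [Finset.sum_congr rfl h3, Finset.sum_const, smul_eq_mul] at h2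
    have h4 : 2 * FE.card = f * (f - 1) := by
      rw [hFE, Finset.card_powersetCard, ← hf, two_mul_choose_two]
    omega
  have hWcount : Tcl.card * m ≤ m * (m - 1) := by
    have hsub2 : Tcl.biUnion (fun M => M.filter (fun e => e ⊆ W)) ⊆
        Finset.powersetCard 2 W := by
      intro e he
      obtain ⟨M, hM, heM⟩ := Finset.mem_biUnion.1 he
      rw [Finset.mem_filter] at heM
      exact Finset.mem_powersetCard.2 ⟨heM.2, (hP.1 M (hTclmem M hM).1).1 e heM.1⟩
    have h1 : (Tcl.biUnion (fun M => M.filter (fun e => e ⊆ W))).card =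
        ∑ M ∈ Tcl, (M.filter (fun e => e ⊆ W)).card := Finset.card_biUnion (hdisjf _)
    have h3 : ∀ M ∈ Tcl, 2 * (M.filter (fun e => e ⊆ W)).card = m := by
      intro M hM
      exact matching_partition (hP.1 M (hTclmem M hM).1) _ (hWsub M hM)
    have h2 : 2 * (Tcl.biUnion (fun M => M.filter (fun e => e ⊆ W))).card = Tcl.card * m := by
      rw [h1, Finset.mul_sum, Finset.sum_congr rfl h3, Finset.sum_const, smul_eq_mul]
    have h4 := Finset.card_le_card hsub2
    rw [Finset.card_powersetCard, ← hm] at h4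
    have h5 : 2 * (m.choose 2) = m * (m-1) := two_mul_choose_two m
    omega
  rcases Nat.eq_zero_or_pos f with hf0 | hf0
  · omega
  · have ht : Tcl.card = f - 1 := by
      have : Tcl.card * f = (f - 1) * f := by rw [hFcount, mul_comm]
      exact Nat.eq_of_mul_eq_mul_right hf0 this
    have : (f - 1) * m ≤ (m - 1) * m := by
      rw [← ht]
      calc Tcl.card * m ≤ m * (m - 1) := hWcount
        _ = (m - 1) * m := mul_comm _ _
    have hfl : f - 1 ≤ m - 1 := Nat.le_of_mul_le_mul_right this hm1
    omega

end OFC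

lemma arith_aux (Rf Rm Rs cf cn f n : ℝ) (r1 : Rf ≤ cf + n + 1) (r2 : 2*Rm + cf ≤ cn)
    (r3 : Rf + Rm = Rs) (r4 : 2*f ≤ n) (r5 : 2*cf ≤ f*f) (r6 : 2*cn ≤ n*n)
    (r7 : 100 ≤ n) (hf0 : 0 ≤ f) : Rs + n ≤ 3*n^2/8 := by
  nlinarith [sq_nonneg (n - 2*f), mul_nonneg (by linarith : (0:ℝ) ≤ n - 100) (by linarith : (0:ℝ) ≤ n)]


set_option maxHeartbeats 1000000 in
/-- For all sufficiently large even `n`, the number of edge-parallelisms of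
the complete graph on an `n`-element set admitting at least one non-identity
automorphism is at most `n! · n ^ (3n²/8)`. -/
theorem count_one_factorisations_with_nontrivial_auto :
    ∃ n₀ : ℕ, ∀ n ≥ n₀, Even n →
      (Nat.card {P : Finset (Finset (Finset (Fin n))) // IsOneFactorisation n P ∧
          ∃ g : Equiv.Perm (Fin n), g ≠ 1 ∧ IsOneFactorisationAuto n P g} : ℝ) ≤
        (n.factorial : ℝ) * (n : ℝ) ^ (3 * (n : ℝ) ^ 2 / 8) := by
  classical
  refine ⟨100, fun n hn _ => ?_⟩
  have hn0 : 0 < n := by omega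
  set pr : Finset (Finset (Finset (Fin n))) → Prop := fun P =>
    IsOneFactorisation n P ∧ ∃ g : Equiv.Perm (Fin n), g ≠ 1 ∧
      IsOneFactorisationAuto n P g with hpr
  have hNat : (Nat.card {P : Finset (Finset (Finset (Fin n))) // pr P}) =
      (Finset.univ.filter pr).card := by
    rw [Nat.card_eq_fintype_card, Fintype.card_subtype]
  have hsub : (Finset.univ.filter pr) ⊆
      ((Finset.univ : Finset (Equiv.Perm (Fin n))).erase 1).biUnion
        (fun g => OFC.Sg n g) := by
    intro P hP
    rw [Finset.mem_filter] at hP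
    obtain ⟨-, hPf, g, hg1, hgA⟩ := hP
    refine Finset.mem_biUnion.2 ⟨g, Finset.mem_erase.2 ⟨hg1, Finset.mem_univ _⟩, ?_⟩
    simp only [OFC.Sg, Finset.mem_filter]
    exact ⟨Finset.mem_univ _, hPf, hgA⟩
  have h1 : (Finset.univ.filter pr).card ≤
      ∑ g ∈ (Finset.univ : Finset (Equiv.Perm (Fin n))).erase 1, (OFC.Sg n g).card :=
    le_trans (Finset.card_le_card hsub) Finset.card_biUnion_le
  have hper : ∀ g ∈ (Finset.univ : Finset (Equiv.Perm (Fin n))).erase 1,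
      ((OFC.Sg n g).card : ℝ) ≤ (n : ℝ) ^ (3 * (n : ℝ) ^ 2 / 8) := by
    intro g hg
    have hg1 : g ≠ 1 := (Finset.mem_erase.1 hg).1
    rcases (OFC.Sg n g).eq_empty_or_nonempty with he | ⟨P, hPmem⟩
    · rw [he]
      simp only [Finset.card_empty, Nat.cast_zero]
      exact Real.rpow_nonneg (by positivity) _
    · simp only [OFC.Sg, Finset.mem_filter] at hPmem
      obtain ⟨-, hPf, hPA⟩ := hPmem
      have hfm := OFC.two_mul_fixed_le hg1 hPf hPA
      have hRa := OFC.Rfix_card_le n g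
      have hRb := OFC.Rmov_card_le n g
      have hRsum : (OFC.Rfix n g).card + (OFC.Rmov n g).card = (OFC.Rset n g).card := by
        rw [OFC.Rfix, OFC.Rmov]
        exact Finset.card_filter_add_card_filter_not _
      have hS := OFC.card_Sg_le n g hn0
      set f := (OFC.Fx n g).card with hf
      have hc1 : 2 * (f.choose 2) ≤ f * f := by
        rw [OFC.two_mul_choose_two]
        exact Nat.mul_le_mul_left _ (Nat.sub_le _ _)
      have hc2 : 2 * (n.choose 2) ≤ n * n := by
        rw [OFC.two_mul_choose_two]
        exact Nat.mul_le_mul_left _ (Nat.sub_le _ _)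
      have hcast : ((OFC.Sg n g).card : ℝ) ≤
          (n : ℝ) ^ ((((OFC.Rset n g).card + n : ℕ)) : ℝ) := by
        rw [Real.rpow_natCast]
        exact_mod_cast hS
      refine le_trans hcast (Real.rpow_le_rpow_of_exponent_le
        (by exact_mod_cast hn0 : (1:ℝ) ≤ (n:ℝ)) ?_)
      have r1 : ((OFC.Rfix n g).card : ℝ) ≤ (f.choose 2 : ℕ) + (n : ℝ) + 1 := by
        exact_mod_cast hRa
      have r2 : 2 * ((OFC.Rmov n g).card : ℝ) + ((f.choose 2 : ℕ) : ℝ) ≤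
          ((n.choose 2 : ℕ) : ℝ) := by exact_mod_cast hRb
      have r3 : ((OFC.Rfix n g).card : ℝ) + ((OFC.Rmov n g).card : ℝ) =
          ((OFC.Rset n g).card : ℝ) := by exact_mod_cast hRsum
      have r4 : 2 * (f : ℝ) ≤ (n : ℝ) := by exact_mod_cast hfm
      have r5 : 2 * ((f.choose 2 : ℕ) : ℝ) ≤ (f : ℝ) * f := by exact_mod_cast hc1
      have r6 : 2 * ((n.choose 2 : ℕ) : ℝ) ≤ (n : ℝ) * n := by exact_mod_cast hc2
      have r7 : (100 : ℝ) ≤ (n : ℝ) := by exact_mod_cast hn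
      have hgoal := arith_aux _ _ _ _ _ _ _ r1 r2 r3 r4 r5 r6 r7
        (by positivity : (0:ℝ) ≤ (f:ℝ))
      push_cast
      linarith [hgoal]
  have hfinal : ((Finset.univ.filter pr).card : ℝ) ≤
      (n.factorial : ℝ) * (n : ℝ) ^ (3 * (n : ℝ) ^ 2 / 8) := by
    calc ((Finset.univ.filter pr).card : ℝ)
        ≤ ∑ g ∈ (Finset.univ : Finset (Equiv.Perm (Fin n))).erase 1,
            ((OFC.Sg n g).card : ℝ) := by exact_mod_cast h1
      _ ≤ ∑ _g ∈ (Finset.univ : Finset (Equiv.Perm (Fin n))).erase 1,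
            (n : ℝ) ^ (3 * (n : ℝ) ^ 2 / 8) := Finset.sum_le_sum hper
      _ = (((Finset.univ : Finset (Equiv.Perm (Fin n))).erase 1).card : ℝ) *
            (n : ℝ) ^ (3 * (n : ℝ) ^ 2 / 8) := by
          rw [Finset.sum_const, nsmul_eq_mul]
      _ ≤ (n.factorial : ℝ) * (n : ℝ) ^ (3 * (n : ℝ) ^ 2 / 8) := by
          apply mul_le_mul_of_nonneg_right _ (Real.rpow_nonneg (by positivity) _)
          have : ((Finset.univ : Finset (Equiv.Perm (Fin n))).erase 1).card ≤
              (Finset.univ : Finset (Equiv.Perm (Fin n))).card :=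
            Finset.card_erase_le
          have h2 : (Finset.univ : Finset (Equiv.Perm (Fin n))).card = n.factorial := by
            rw [Finset.card_univ, Fintype.card_perm, Fintype.card_fin]
          exact_mod_cast h2 ▸ this
  rw [hNat]
  exact hfinal
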